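/- Let L > 0 and 0 < η < 1/L. Let F : E → ℝ be convex and differentiable with ∇F Lipschitz continuous with constant L, let R : E → ℝ be convex, and set G = F + R. Let x* be a global minimizer of G. For x ∈ E and v ∈ E, let x⁺ be the unique minimizer over y ∈ E of (1/2)‖y − (x − η·v)‖² + η·R(y), and set Δ = v − ∇F(x). Then ‖x⁺ − x*‖² ≤ ‖x − x*‖² − 2η·(G(x⁺) − G(x*)) − 2η·⟨Δ, x⁺ − x*⟩. -/

import Mathlib

/-!
The prox objective `y ↦ ½‖y - (x - η v)‖² + η R y` is `1`-strongly convex, so its minimizer `x⁺`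
satisfies a quadratic growth bound at `x*`; this controls `R`. The smooth part `F` is bounded above
at `x⁺` by the descent lemma and below at `x*` by the gradient inequality, both linearized at `x`.
In the sum, the term `η L ‖x⁺ - x‖²` of the descent lemma is absorbed by the `-‖x⁺ - x‖²` of the
growth bound because `η L < 1`.
-/

open RealInnerProductSpace Set Filter Topology AffineMap

section Gradient

variable {E : Type*} [NormedAddCommGroup E] [InnerProductSpace ℝ E] [CompleteSpace E]

theorem HasGradientAt.hasDerivAt_comp_lineMap {f : E → ℝ} {g x y : E} {t : ℝ}
    (hf : HasGradientAt f g (lineMap x y t)) :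
    HasDerivAt (fun s : ℝ ↦ f (lineMap x y s)) ⟪g, y - x⟫ t :=
  hf.hasFDerivAt.comp_hasDerivAt t hasDerivAt_lineMap

theorem ConvexOn.add_inner_le_of_hasGradientAt {s : Set E} {f : E → ℝ} {g x y : E}
    (hf : ConvexOn ℝ s f) (hx : x ∈ s) (hy : y ∈ s) (hg : HasGradientAt f g x) :
    f x + ⟪g, y - x⟫ ≤ f y := by
  have hline : ConvexOn ℝ (lineMap x y ⁻¹' s) fun t : ℝ ↦ f (lineMap x y t) :=
    hf.comp_affineMap (lineMap x y)
  have hslope := hline.le_slope_of_hasDerivAt (x := 0) (y := 1) (by simpa using hx)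
    (by simpa using hy) zero_lt_one (HasGradientAt.hasDerivAt_comp_lineMap (by simpa using hg))
  rw [slope_def_field] at hslope
  simp only [lineMap_apply_one, lineMap_apply_zero, sub_zero, div_one] at hslope
  linarith

theorem LipschitzWith.le_add_inner_add_sq_norm_of_hasGradientAt {f : E → ℝ} {f' : E → E}
    {K : NNReal} (hK : LipschitzWith K f') (hf : ∀ z, HasGradientAt f (f' z) z) (x y : E) :
    f y ≤ f x + ⟪f' x, y - x⟫ + K / 2 * ‖y - x‖ ^ 2 := by
  set φ : ℝ → ℝ := fun t ↦ f (lineMap x y t) - t * ⟪f' x, y - x⟫ - K / 2 * t ^ 2 * ‖y - x‖ ^ 2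
  have hφ : ∀ t, HasDerivAt φ (⟪f' (lineMap x y t) - f' x, y - x⟫ - K * t * ‖y - x‖ ^ 2) t := by
    intro t
    refine (((hf (lineMap x y t)).hasDerivAt_comp_lineMap.sub ((hasDerivAt_id t).mul_const
      ⟪f' x, y - x⟫)).sub (((hasDerivAt_pow 2 t).const_mul (K / 2 : ℝ)).mul_const
      (‖y - x‖ ^ 2))).congr_deriv ?_
    rw [inner_sub_left]
    ring
  have hφ_nonpos : ∀ t ∈ interior (Icc (0 : ℝ) 1),
      ⟪f' (lineMap x y t) - f' x, y - x⟫ - K * t * ‖y - x‖ ^ 2 ≤ 0 := by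
    intro t ht
    rw [interior_Icc] at ht
    have hlip : ‖f' (lineMap x y t) - f' x‖ ≤ K * (t * ‖y - x‖) := by
      simpa [← dist_eq_norm, dist_lineMap_left, Real.norm_of_nonneg ht.1.le, dist_comm y x]
        using hK.dist_le_mul (lineMap x y t) x
    have := (real_inner_le_norm _ _).trans
      (mul_le_mul_of_nonneg_right hlip (norm_nonneg (y - x)))
    linarith
  have hanti : AntitoneOn φ (Icc 0 1) :=
    antitoneOn_of_hasDerivWithinAt_nonpos (convex_Icc 0 1)
      (HasDerivAt.continuousOn fun t _ ↦ hφ t) (fun t _ ↦ (hφ t).hasDerivWithinAt) hφ_nonpos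
  have hφ10 : φ 1 ≤ φ 0 :=
    hanti (left_mem_Icc.2 zero_le_one) (right_mem_Icc.2 zero_le_one) zero_le_one
  simp only [φ, lineMap_apply_one, lineMap_apply_zero] at hφ10
  linarith

end Gradient

section StrongConvexity

variable {E : Type*} [NormedAddCommGroup E] [InnerProductSpace ℝ E]

theorem StrongConvexOn.add_convexOn {s : Set E} {m : ℝ} {f g : E → ℝ}
    (hf : StrongConvexOn s m f) (hg : ConvexOn ℝ s g) : StrongConvexOn s m (f + g) := by
  unfold StrongConvexOn at hf ⊢
  simpa using hf.add hg.uniformConvexOn_zero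

theorem strongConvexOn_univ_half_sq_norm_sub (u : E) :
    StrongConvexOn univ 1 fun y : E ↦ 1 / 2 * ‖y - u‖ ^ 2 := by
  have hsplit : (fun y : E ↦ 1 / 2 * ‖y - u‖ ^ 2 - 1 / 2 * ‖y‖ ^ 2) =
      fun y ↦ (-innerₛₗ ℝ u) y + 1 / 2 * ‖u‖ ^ 2 := by
    ext y
    simp only [norm_sub_sq_real, LinearMap.neg_apply, innerₛₗ_apply_apply, real_inner_comm u]
    ring
  rw [strongConvexOn_iff_convex, hsplit]
  exact ((-innerₛₗ ℝ u).convexOn convex_univ).add_const _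

theorem StrongConvexOn.add_sq_norm_sub_le_of_isMinOn {s : Set E} {m : ℝ} {f : E → ℝ} {x y : E}
    (hf : StrongConvexOn s m f) (hmin : IsMinOn f s x) (hx : x ∈ s) (hy : y ∈ s) :
    f x + m / 2 * ‖y - x‖ ^ 2 ≤ f y := by
  set c := m / 2 * ‖y - x‖ ^ 2
  have hgap : ∀ t ∈ Ioo (0 : ℝ) 1, f x + (1 - t) * c ≤ f y := by
    intro t ht
    have hcomb := hf.2 hy hx ht.1.le (sub_nonneg.2 ht.2.le) (add_sub_cancel t 1)
    have hle : f x ≤ f (t • y + (1 - t) • x) :=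
      hmin (hf.1 hy hx ht.1.le (sub_nonneg.2 ht.2.le) (add_sub_cancel t 1))
    simp only [smul_eq_mul] at hcomb
    have hscaled : t * (f x + (1 - t) * c - f y) ≤ 0 := by
      simp only [c]
      linarith
    nlinarith [ht.1]
  have hlim : Tendsto (fun t : ℝ ↦ f x + (1 - t) * c) (𝓝[>] 0) (𝓝 (f x + c)) :=
    tendsto_nhdsWithin_of_tendsto_nhds <|
      (by fun_prop : Continuous fun t : ℝ ↦ f x + (1 - t) * c).tendsto' 0 _ (by simp)
  refine le_of_tendsto hlim ?_
  filter_upwards [Ioo_mem_nhdsGT one_pos] using hgap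

theorem ConvexOn.prox_objective_add_half_sq_norm_le {R : E → ℝ} {η : ℝ} {u xp : E}
    (hR : ConvexOn ℝ univ R) (hη : 0 ≤ η)
    (hxp : ∀ y, 1 / 2 * ‖xp - u‖ ^ 2 + η * R xp ≤ 1 / 2 * ‖y - u‖ ^ 2 + η * R y) (y : E) :
    1 / 2 * ‖xp - u‖ ^ 2 + η * R xp + 1 / 2 * ‖y - xp‖ ^ 2 ≤ 1 / 2 * ‖y - u‖ ^ 2 + η * R y := by
  have hstrong := (strongConvexOn_univ_half_sq_norm_sub u).add_convexOn (hR.smul hη)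
  simpa using hstrong.add_sq_norm_sub_le_of_isMinOn (isMinOn_univ_iff.2 hxp) (mem_univ xp)
    (mem_univ y)

end StrongConvexity

theorem prox_step_distance_decrease_general
    {E : Type*} [NormedAddCommGroup E] [InnerProductSpace ℝ E] [FiniteDimensional ℝ E]
    (L η : ℝ) (hη : 0 < η) (hηL : η < 1 / L)
    (F : E → ℝ) (F' : E → E) (hF : ∀ x, HasGradientAt F (F' x) x)
    (hFconv : ConvexOn ℝ Set.univ F)
    (hLip : LipschitzWith (Real.toNNReal L) F')
    (R : E → ℝ) (hRconv : ConvexOn ℝ Set.univ R)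
    (G : E → ℝ) (hG : G = fun y => F y + R y)
    (xstar : E)
    (x v xp : E)
    (hxp : ∀ y : E, 1 / 2 * ‖xp - (x - η • v)‖ ^ 2 + η * R xp ≤
      1 / 2 * ‖y - (x - η • v)‖ ^ 2 + η * R y)
    (Δ : E) (hΔ : Δ = v - F' x) :
    ‖xp - xstar‖ ^ 2 ≤ ‖x - xstar‖ ^ 2 - 2 * η * (G xp - G xstar) -
      2 * η * ⟪Δ, xp - xstar⟫ := by
  have hL : 0 < L := one_div_pos.1 (hη.trans hηL)
  have hηL' : η * L < 1 := (lt_div_iff₀ hL).1 (by simpa using hηL)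
  have hgrowth := hRconv.prox_objective_add_half_sq_norm_le hη.le hxp xstar
  have hgrad : F x + ⟪F' x, xstar - x⟫ ≤ F xstar :=
    hFconv.add_inner_le_of_hasGradientAt (mem_univ x) (mem_univ xstar) (hF x)
  have hdesc : F xp ≤ F x + ⟪F' x, xp - x⟫ + L / 2 * ‖xp - x‖ ^ 2 := by
    simpa [Real.coe_toNNReal L hL.le] using hLip.le_add_inner_add_sq_norm_of_hasGradientAt hF x xp
  have hshift : ‖xstar - (x - η • v)‖ ^ 2 - ‖xp - (x - η • v)‖ ^ 2 =
      ‖xstar - x‖ ^ 2 - ‖xp - x‖ ^ 2 - 2 * η * ⟪v, xp - xstar⟫ := by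
    have hsub : ∀ w : E, w - (x - η • v) = (w - x) + η • v := fun w ↦ by abel
    rw [hsub, hsub, norm_add_sq_real, norm_add_sq_real, real_inner_smul_right,
      real_inner_smul_right, ← sub_sub_sub_cancel_right xp xstar x, inner_sub_right,
      real_inner_comm v, real_inner_comm v]
    ring
  have hinner : ⟪F' x, xp - x⟫ - ⟪F' x, xstar - x⟫ = ⟪F' x, xp - xstar⟫ := by
    rw [← inner_sub_right, sub_sub_sub_cancel_right]
  subst hG hΔ
  rw [inner_sub_left, norm_sub_rev xp xstar, norm_sub_rev x xstar]
  nlinarith [mul_le_mul_of_nonneg_right hηL'.le (sq_nonneg ‖xp - x‖)]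

/-- Per-step distance-decrease inequality for the proximal step:
with `x⁺ = prox_{ηR}(x - η v)` and `Δ = v - ∇F(x)`,
`‖x⁺ - x*‖² ≤ ‖x - x*‖² - 2η (G x⁺ - G x*) - 2η ⟨Δ, x⁺ - x*⟩`. -/
theorem prox_step_distance_decrease
    {E : Type*} [NormedAddCommGroup E] [InnerProductSpace ℝ E] [FiniteDimensional ℝ E]
    (L η : ℝ) (hL : 0 < L) (hη : 0 < η) (hηL : η < 1 / L)
    (F : E → ℝ) (F' : E → E) (hF : ∀ x, HasGradientAt F (F' x) x)
    (hFconv : ConvexOn ℝ Set.univ F)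
    (hLip : LipschitzWith (Real.toNNReal L) F')
    (R : E → ℝ) (hRconv : ConvexOn ℝ Set.univ R)
    (G : E → ℝ) (hG : G = fun y => F y + R y)
    (xstar : E) (hmin : ∀ y, G xstar ≤ G y)
    (x v xp : E)
    (hxp : ∀ y : E, 1 / 2 * ‖xp - (x - η • v)‖ ^ 2 + η * R xp ≤
      1 / 2 * ‖y - (x - η • v)‖ ^ 2 + η * R y)
    (Δ : E) (hΔ : Δ = v - F' x) :
    ‖xp - xstar‖ ^ 2 ≤ ‖x - xstar‖ ^ 2 - 2 * η * (G xp - G xstar) -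
      2 * η * ⟪Δ, xp - xstar⟫ :=
  prox_step_distance_decrease_general L η hη hηL F F' hF hFconv hLip R hRconv G hG xstar x v xp hxp
    Δ hΔ
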